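/- Along the homogenised flow, the constraint θ̄₂ = −(p₀/ω(y₀))p̄₂ − θ_* D_yL₀ ȳ₂ − θ_*²(D_yL₀)²/(16ω(y₀)) + θ_*(D_tL₀)²/(4ω²(y₀)) is consistent with the ODE system for (φ̄₂, θ̄₂, ȳ₂, p̄₂): differentiating it in time and using ẏ₀ = p₀, ṗ₀ = −θ_*ω'(y₀), dȳ₂/dt = p̄₂ − θ_* D_yL₀ D_tL₀/(4ω(y₀)), dp̄₂/dt = −ω'(y₀)θ̄₂ − θ_*ω''(y₀)ȳ₂ − θ_*² D_yL₀ D_y²L₀/8 + θ_* D_tL₀ D_tD_yL₀/(4ω(y₀)), together with the identity D_t²L₀ = −θ_* ω'(y₀) D_yL₀ + ẏ₀² D_y²L₀, yields dθ̄₂/dt = d/dt[θ_*(D_tL₀)²/(8ω²(y₀))]. -/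

import Mathlib

open Real

/-- `D_t L₀ = ω'(y₀) p₀ / ω(y₀)` along the homogenised flow. -/
noncomputable def DtL (ω y₀ p₀ : ℝ → ℝ) (t : ℝ) : ℝ :=
  deriv ω (y₀ t) * p₀ t / ω (y₀ t)

/-- `D_y L₀ = ω'(y₀)/ω(y₀)`. -/
noncomputable def DyL (ω y₀ : ℝ → ℝ) (t : ℝ) : ℝ :=
  deriv ω (y₀ t) / ω (y₀ t)

/-- `D_y² L₀ = ω''(y₀)/ω(y₀) − (ω'(y₀)/ω(y₀))²`. -/
noncomputable def Dy2L (ω y₀ : ℝ → ℝ) (t : ℝ) : ℝ :=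
  deriv (deriv ω) (y₀ t) / ω (y₀ t) - (deriv ω (y₀ t) / ω (y₀ t)) ^ 2

/-- `D_t D_y L₀ = d/dt (ω'(y₀)/ω(y₀))`. -/
noncomputable def DtDyL (ω y₀ : ℝ → ℝ) (t : ℝ) : ℝ :=
  deriv (fun s => deriv ω (y₀ s) / ω (y₀ s)) t

/-- The constraint expression for `θ̄₂`. -/
noncomputable def thetaBar2 (ω y₀ p₀ ybar2 pbar2 : ℝ → ℝ) (θs : ℝ) (t : ℝ) : ℝ :=
  -(p₀ t / ω (y₀ t)) * pbar2 t - θs * DyL ω y₀ t * ybar2 t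
    - θs ^ 2 * (DyL ω y₀ t) ^ 2 / (16 * ω (y₀ t))
    + θs * (DtL ω y₀ p₀ t) ^ 2 / (4 * (ω (y₀ t)) ^ 2)

set_option maxHeartbeats 2000000 in
/-- Along the homogenised flow, the constraint defining `θ̄₂` is
consistent with the ODE system for `(φ̄₂, θ̄₂, ȳ₂, p̄₂)`: differentiating it in
time, using `ẏ₀ = p₀`, `ṗ₀ = −θ_*ω'(y₀)` and the equations for `ȳ₂, p̄₂`,
yields `dθ̄₂/dt = d/dt[θ_*(D_tL₀)²/(8ω²(y₀))]`. -/
theorem stmt13 (ω : ℝ → ℝ) (hω : ContDiff ℝ (⊤ : ℕ∞) ω) (hωpos : ∀ x, 0 < ω x)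
    (θs : ℝ) (hθs : 0 < θs)
    (y₀ p₀ ybar2 pbar2 : ℝ → ℝ)
    (hy₀ : Differentiable ℝ y₀) (hp₀ : Differentiable ℝ p₀)
    (hybar2 : Differentiable ℝ ybar2) (hpbar2 : Differentiable ℝ pbar2)
    (hode1 : ∀ t, deriv y₀ t = p₀ t)
    (hode2 : ∀ t, deriv p₀ t = -(θs * deriv ω (y₀ t)))
    (hode3 : ∀ t, deriv ybar2 t
      = pbar2 t - θs * DyL ω y₀ t * DtL ω y₀ p₀ t / (4 * ω (y₀ t)))
    (hode4 : ∀ t, deriv pbar2 t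
      = -(deriv ω (y₀ t)) * thetaBar2 ω y₀ p₀ ybar2 pbar2 θs t
        - θs * deriv (deriv ω) (y₀ t) * ybar2 t
        - θs ^ 2 * DyL ω y₀ t * Dy2L ω y₀ t / 8
        + θs * DtL ω y₀ p₀ t * DtDyL ω y₀ t / (4 * ω (y₀ t))) :
    ∀ t, deriv (thetaBar2 ω y₀ p₀ ybar2 pbar2 θs) t
      = deriv (fun s => θs * (DtL ω y₀ p₀ s) ^ 2 / (8 * (ω (y₀ s)) ^ 2)) t := by

  intro t
  have hωd := hω.differentiable (by simp)
  have hωinf : ContDiff ℝ (⊤ : ℕ∞) ω := hω.of_le (by simp)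
  have hω'c := (contDiff_infty_iff_deriv.1 hωinf).2
  have hω'd := hω'c.differentiable (by simp)
  have hy : HasDerivAt y₀ (p₀ t) t := hode1 t ▸ (hy₀ t).hasDerivAt
  have hp : HasDerivAt p₀ (-(θs * deriv ω (y₀ t))) t := hode2 t ▸ (hp₀ t).hasDerivAt
  have hpb : HasDerivAt pbar2 (deriv pbar2 t) t := (hpbar2 t).hasDerivAt
  have hyb : HasDerivAt ybar2 (deriv ybar2 t) t := (hybar2 t).hasDerivAt
  have hWne : ω (y₀ t) ≠ 0 := (hωpos _).ne'
  have hW : HasDerivAt (fun s => ω (y₀ s)) (deriv ω (y₀ t) * p₀ t) t :=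
    (hωd (y₀ t)).hasDerivAt.comp t hy
  have hW' : HasDerivAt (fun s => deriv ω (y₀ s)) (deriv (deriv ω) (y₀ t) * p₀ t) t :=
    (hω'd (y₀ t)).hasDerivAt.comp t hy
  have hDyL : HasDerivAt (DyL ω y₀)
      ((deriv (deriv ω) (y₀ t) * p₀ t * ω (y₀ t)
        - deriv ω (y₀ t) * (deriv ω (y₀ t) * p₀ t)) / ω (y₀ t) ^ 2) t :=
    hW'.div hW hWne
  have hDtDyL : DtDyL ω y₀ t
      = (deriv (deriv ω) (y₀ t) * p₀ t * ω (y₀ t)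
        - deriv ω (y₀ t) * (deriv ω (y₀ t) * p₀ t)) / ω (y₀ t) ^ 2 :=
    (hW'.div hW hWne).deriv
  have hDtL : HasDerivAt (DtL ω y₀ p₀)
      (((deriv (deriv ω) (y₀ t) * p₀ t * p₀ t
          + deriv ω (y₀ t) * -(θs * deriv ω (y₀ t))) * ω (y₀ t)
        - deriv ω (y₀ t) * p₀ t * (deriv ω (y₀ t) * p₀ t)) / ω (y₀ t) ^ 2) t :=
    (hW'.mul hp).div hW hWne
  have h16 : (16 : ℝ) * ω (y₀ t) ≠ 0 := by positivity
  have h4 : (4 : ℝ) * ω (y₀ t) ^ 2 ≠ 0 := by positivity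
  have h8 : (8 : ℝ) * ω (y₀ t) ^ 2 ≠ 0 := by positivity
  have hT : HasDerivAt (thetaBar2 ω y₀ p₀ ybar2 pbar2 θs)
      ((-((-(θs * deriv ω (y₀ t)) * ω (y₀ t) - p₀ t * (deriv ω (y₀ t) * p₀ t)) / ω (y₀ t) ^ 2)
          * pbar2 t + -(p₀ t / ω (y₀ t)) * deriv pbar2 t
        - (θs * ((deriv (deriv ω) (y₀ t) * p₀ t * ω (y₀ t)
            - deriv ω (y₀ t) * (deriv ω (y₀ t) * p₀ t)) / ω (y₀ t) ^ 2) * ybar2 t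
          + θs * DyL ω y₀ t * deriv ybar2 t)
        - (θs ^ 2 * (((2:ℕ):ℝ) * DyL ω y₀ t ^ 1
              * ((deriv (deriv ω) (y₀ t) * p₀ t * ω (y₀ t)
                - deriv ω (y₀ t) * (deriv ω (y₀ t) * p₀ t)) / ω (y₀ t) ^ 2))
            * (16 * ω (y₀ t))
          - θs ^ 2 * DyL ω y₀ t ^ 2 * (16 * (deriv ω (y₀ t) * p₀ t)))
          / (16 * ω (y₀ t)) ^ 2)
        + (θs * (((2:ℕ):ℝ) * DtL ω y₀ p₀ t ^ 1
              * (((deriv (deriv ω) (y₀ t) * p₀ t * p₀ t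
                  + deriv ω (y₀ t) * -(θs * deriv ω (y₀ t))) * ω (y₀ t)
                - deriv ω (y₀ t) * p₀ t * (deriv ω (y₀ t) * p₀ t)) / ω (y₀ t) ^ 2))
            * (4 * ω (y₀ t) ^ 2)
          - θs * DtL ω y₀ p₀ t ^ 2
            * (4 * (((2:ℕ):ℝ) * ω (y₀ t) ^ 1 * (deriv ω (y₀ t) * p₀ t))))
          / (4 * ω (y₀ t) ^ 2) ^ 2) t := by
    exact ((((hp.div hW hWne).neg.mul hpb).sub ((hDyL.const_mul θs).mul hyb)).sub
        (((hDyL.pow 2).const_mul (θs ^ 2)).div (hW.const_mul 16) h16)).add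
      (((hDtL.pow 2).const_mul θs).div ((hW.pow 2).const_mul 4) h4)
  have hR : HasDerivAt (fun s => θs * (DtL ω y₀ p₀ s) ^ 2 / (8 * (ω (y₀ s)) ^ 2))
      ((θs * (((2:ℕ):ℝ) * DtL ω y₀ p₀ t ^ 1
            * (((deriv (deriv ω) (y₀ t) * p₀ t * p₀ t
                + deriv ω (y₀ t) * -(θs * deriv ω (y₀ t))) * ω (y₀ t)
              - deriv ω (y₀ t) * p₀ t * (deriv ω (y₀ t) * p₀ t)) / ω (y₀ t) ^ 2))
          * (8 * ω (y₀ t) ^ 2)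
        - θs * DtL ω y₀ p₀ t ^ 2
          * (8 * (((2:ℕ):ℝ) * ω (y₀ t) ^ 1 * (deriv ω (y₀ t) * p₀ t))))
        / (8 * ω (y₀ t) ^ 2) ^ 2) t := by
    exact ((hDtL.pow 2).const_mul θs).div ((hW.pow 2).const_mul 8) h8
  rw [hT.deriv, hR.deriv, hode3 t, hode4 t, hDtDyL]
  simp only [thetaBar2, DtL, DyL, Dy2L]
  push_cast
  field_simp
  ring
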